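/- arXiv:math/0008046 — 5 statements merged into one kernel-verified Lean document; each statement's English description precedes it below -/
import Mathlib

section
/- Let ε be a primitive p-th root of unity with p odd, p > 1. For any integer n, write n = n₀ + p·n₁ with 0 ≤ n₀ < p. Then the balanced Gaussian binomial evaluated at ε satisfies [n choose p]_ε = n₁. -/
noncomputable section

/-- The field `ℂ(q)` of rational functions. -/
abbrev Fq : Type := RatFunc ℂ

/-- The indeterminate `q`. -/
def q : Fq := RatFunc.X

/-- The balanced quantum integer `[n]_q = (q^n - q^{-n})/(q - q^{-1})`. -/
def qint (n : ℤ) : Fq := (q ^ n - q ^ (-n)) / (q - q⁻¹)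

/-- The quantum factorial `[m]_q!`. -/
def qfact : ℕ → Fq
  | 0 => 1
  | n + 1 => qint (n + 1) * qfact n

/-- The balanced Gaussian binomial coefficient `[n choose k]_q`,
with the convention that it is `0` for `k < 0`. -/
def qbinom (n k : ℤ) : Fq :=
  if k < 0 then 0
  else (∏ i ∈ Finset.range k.toNat, qint (n - i)) / qfact k.toNat


/-!
Quantum integers are Laurent polynomials, and `T ↦ q` embeds `ℂ[T;T⁻¹]` into `Fq`; so the identity
`[n choose p] · [p]! = ∏_{i<p} [n - i]` holds among Laurent polynomials, where it can be evaluated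
at `ε`. With `n - n₀ = p n₁`, the factor `[p n₁] = [n₁]_{q^p} [p]` on the right and the factor `[p]`
of `[p]!` cancel. At `ε` we have `[n₁]_{ε^p} = n₁`, while the remaining factors `[n - i]`
(`i ≠ n₀`) and `[j]` (`0 < j < p`) agree up to order: `[m]_ε` only depends on `m` mod `p`, and it
vanishes only when `p ∣ m` because `p` is odd.
-/

open Finset LaurentPolynomial

theorem ZMod.prod_range_natCast {M : Type*} [CommMonoid M] (p : ℕ) [NeZero p] (g : ZMod p → M) :
    ∏ i ∈ range p, g i = ∏ r, g r :=
  prod_nbij' (fun i => (i : ZMod p)) (fun r => r.val) (by simp) (fun r _ => by simp [ZMod.val_lt])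
    (fun i hi => by simp [ZMod.val_natCast, Nat.mod_eq_of_lt (mem_range.mp hi)])
    (fun r _ => by simp) (fun _ _ => rfl)

theorem IsPrimitiveRoot.zpow_sub_zpow_neg_ne_zero {K : Type*} [Field K] {p : ℕ} {ζ : K}
    (hζ : IsPrimitiveRoot ζ p) (hp : Odd p) {r : ℤ} (hr : ¬(p : ℤ) ∣ r) : ζ ^ r - ζ ^ (-r) ≠ 0 := by
  intro h
  have hζ0 : ζ ≠ 0 := hζ.ne_zero (by rintro rfl; simp at hp)
  have h2r : ζ ^ (2 * r) = 1 := by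
    rw [two_mul, zpow_add₀ hζ0]
    nth_rewrite 2 [sub_eq_zero.mp h]
    rw [← zpow_add₀ hζ0, add_neg_cancel, zpow_zero]
  have hdvd : (p : ℤ) ∣ 2 * r := (hζ.zpow_eq_one_iff_dvd _).mp h2r
  exact hr (Int.dvd_of_dvd_mul_right_of_gcd_one hdvd (by exact_mod_cast hp.coprime_two_right))

namespace LaurentPolynomial

theorem eval₂_ofCoeff {R S : Type*} [CommSemiring R] [CommSemiring S] (f : R →+* S) (x : Sˣ)
    (c : ℤ →₀ R) : eval₂ f x (AddMonoidAlgebra.ofCoeff c) = c.sum fun i a => f a * ↑(x ^ i) := by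
  conv_lhs => rw [← Finsupp.sum_single c, AddMonoidAlgebra.ofCoeff_finsuppSum]
  rw [map_finsuppSum]
  exact Finsupp.sum_congr fun i _ => by simp [single_eq_C_mul_T]

open Polynomial in
theorem eval₂_algebraMap_X_injective {K : Type*} [Field K] :
    Function.Injective
      (eval₂ (algebraMap K (RatFunc K)) (Units.mk0 RatFunc.X RatFunc.X_ne_zero)) := by
  rw [injective_iff_map_eq_zero]
  intro f hf
  obtain ⟨n, f', hf'⟩ := exists_T_pow f
  have := congrArg (eval₂ (algebraMap K (RatFunc K)) (Units.mk0 RatFunc.X RatFunc.X_ne_zero)) hf'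
  rw [eval₂_toLaurent, map_mul, hf, zero_mul, Units.val_mk0, ← aeval_def, ← RatFunc.algebraMap_X,
    aeval_algebraMap_apply, aeval_X_left_apply, map_eq_zero_iff _ (RatFunc.algebraMap_injective K),
    ← toLaurent_eq_zero, hf'] at this
  exact (isUnit_T _).mul_left_eq_zero.mp this

variable {R : Type*} [CommRing R]

/-- The balanced quantum integer `[m]` in the variable `T ^ t`:
`∑_{j<m} T ^ (t (2j + 1 - m)) = (T ^ (tm) - T ^ (-tm)) / (T ^ t - T ^ (-t))`. -/
def quantumNat (t : ℤ) (m : ℕ) : R[T;T⁻¹] := ∑ j ∈ range m, T (t * (2 * j + 1 - m))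

theorem quantumNat_mul_T_sub_T (t : ℤ) (m : ℕ) :
    quantumNat t m * (T t - T (-t)) = (T (t * m) - T (-(t * m)) : R[T;T⁻¹]) := by
  have telescope (j : ℕ) : (T (t * (2 * j + 1 - m)) * (T t - T (-t)) : R[T;T⁻¹]) =
      T (t * (2 * (j + 1 : ℕ) - m)) - T (t * (2 * j - m)) := by
    rw [mul_sub, ← T_add, ← T_add]
    push_cast
    ring_nf
  rw [quantumNat, sum_mul, sum_congr rfl fun j _ => telescope j,
    sum_range_sub (fun j : ℕ => (T (t * (2 * j - m)) : R[T;T⁻¹]))]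
  ring_nf

def quantumInt (t m : ℤ) : R[T;T⁻¹] :=
  if 0 ≤ m then quantumNat t m.toNat else -quantumNat t (-m).toNat

theorem quantumInt_mul_T_sub_T (t m : ℤ) :
    quantumInt t m * (T t - T (-t)) = (T (t * m) - T (-(t * m)) : R[T;T⁻¹]) := by
  unfold quantumInt
  split_ifs with hm
  · rw [quantumNat_mul_T_sub_T, Int.toNat_of_nonneg hm]
  · rw [neg_mul, quantumNat_mul_T_sub_T, Int.toNat_of_nonneg (by omega), mul_neg, neg_neg,
      neg_sub]

theorem T_sub_T_neg_ne_zero [Nontrivial R] {t : ℤ} (ht : t ≠ 0) :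
    (T t - T (-t) : R[T;T⁻¹]) ≠ 0 := by
  intro h
  have := congrArg (fun f : R[T;T⁻¹] => f.coeff t) h
  simp only [AddMonoidAlgebra.coeff_sub, Finsupp.sub_apply, T_apply, if_pos,
    if_neg (show -t ≠ t by omega), AddMonoidAlgebra.coeff_zero, Finsupp.zero_apply,
    sub_zero] at this
  exact one_ne_zero this

theorem quantumInt_ne_zero [Nontrivial R] {t m : ℤ} (ht : t ≠ 0) (hm : m ≠ 0) :
    (quantumInt t m : R[T;T⁻¹]) ≠ 0 := by
  intro h
  have := quantumInt_mul_T_sub_T (R := R) t m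
  rw [h, zero_mul] at this
  exact T_sub_T_neg_ne_zero (mul_ne_zero ht hm) this.symm

theorem quantumInt_mul_quantumInt [IsDomain R] {t : ℤ} (ht : t ≠ 0) (s m : ℤ) :
    quantumInt (t * s) m * quantumInt t s = (quantumInt t (s * m) : R[T;T⁻¹]) := by
  apply mul_right_cancel₀ (T_sub_T_neg_ne_zero ht)
  rw [mul_assoc, quantumInt_mul_T_sub_T, quantumInt_mul_T_sub_T, quantumInt_mul_T_sub_T,
    mul_assoc]

theorem prod_quantumInt_sub_eq_mul_prod_erase [IsDomain R] {n n₁ : ℤ} {p k : ℕ} (hk : k < p)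
    (hnk : n - k = p * n₁) :
    ∏ i ∈ range p, (quantumInt 1 (n - i) : R[T;T⁻¹]) =
      quantumInt p n₁ * quantumInt 1 p * ∏ i ∈ (range p).erase k, quantumInt 1 (n - i) := by
  rw [← mul_prod_erase _ _ (mem_range.mpr hk), hnk, ← quantumInt_mul_quantumInt one_ne_zero,
    one_mul]

theorem eval₂_quantumInt_of_zpow_eq_one {S : Type*} [CommRing S] (f : R →+* S) {x : Sˣ} {t : ℤ}
    (hx : x ^ t = 1) (m : ℤ) : eval₂ f x (quantumInt t m) = m := by
  have hnat (k : ℕ) : eval₂ f x (quantumNat t k) = k := by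
    simp [quantumNat, zpow_mul, hx]
  unfold quantumInt
  split_ifs with hm
  · rw [hnat, ← Int.cast_natCast, Int.toNat_of_nonneg hm]
  · rw [map_neg, hnat, ← Int.cast_natCast, Int.toNat_of_nonneg (by omega), Int.cast_neg, neg_neg]

section Field

variable {K : Type*} [Field K] (f : R →+* K)

theorem eval₂_quantumInt_mul (x : Kˣ) (t m : ℤ) :
    eval₂ f x (quantumInt t m) * ((x : K) ^ t - (x : K) ^ (-t)) =
      (x : K) ^ (t * m) - (x : K) ^ (-(t * m)) := by
  simpa using congrArg (eval₂ f x) (quantumInt_mul_T_sub_T t m)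

variable {p : ℕ} {x : Kˣ}

theorem eval₂_quantumInt_ne_zero (hx : IsPrimitiveRoot (x : K) p) (hp : Odd p) {m : ℤ}
    (hm : ¬(p : ℤ) ∣ m) : eval₂ f x (quantumInt 1 m) ≠ 0 := by
  intro h
  have := eval₂_quantumInt_mul f x 1 m
  rw [h, zero_mul, one_mul] at this
  exact hx.zpow_sub_zpow_neg_ne_zero hp hm this.symm

theorem eval₂_quantumInt_congr (hx : IsPrimitiveRoot (x : K) p) (hx1 : (x : K) - (x : K)⁻¹ ≠ 0)
    {m m' : ℤ} (h : (m : ZMod p) = m') :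
    eval₂ f x (quantumInt 1 m) = eval₂ f x (quantumInt 1 m') := by
  have hx0 : (x : K) ≠ 0 := x.ne_zero
  have hper {a b : ℤ} (hab : (a : ZMod p) = b) : (x : K) ^ a = (x : K) ^ b := by
    rw [← sub_add_cancel a b, zpow_add₀ hx0,
      (hx.zpow_eq_one_iff_dvd _).mpr ((ZMod.intCast_eq_intCast_iff_dvd_sub _ _ _).mp hab.symm),
      one_mul]
  apply mul_right_cancel₀ (b := (x : K) ^ (1 : ℤ) - (x : K) ^ (-1 : ℤ)) (by simpa using hx1)
  rw [eval₂_quantumInt_mul, eval₂_quantumInt_mul, one_mul, one_mul, hper h,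
    hper (a := -m) (b := -m') (by push_cast; rw [h])]

theorem prod_erase_eval₂_quantumInt_sub [NeZero p] (hx : IsPrimitiveRoot (x : K) p)
    (hx1 : (x : K) - (x : K)⁻¹ ≠ 0) (n : ℤ) {k : ℕ} (hk : k < p) (hnk : (n : ZMod p) = k) :
    ∏ i ∈ (range p).erase k, eval₂ f x (quantumInt 1 (n - i)) =
      ∏ j ∈ range (p - 1), eval₂ f x (quantumInt 1 (j + 1)) := by
  set e : ℤ → K := fun m => eval₂ f x (quantumInt 1 m)
  -- `e` as a function on `ZMod p`, patched to `1` at the residue `0` that is left out on both sides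
  let g : ZMod p → K := fun r => if r = 0 then 1 else e r.val
  have hg {m : ℤ} (hm : (m : ZMod p) ≠ 0) : e m = g m := by
    simp only [g, if_neg hm]
    exact eval₂_quantumInt_congr f hx hx1 (by simp)
  have hrange : range p = range (p - 1 + 1) := by rw [Nat.sub_add_cancel NeZero.one_le]
  calc ∏ i ∈ (range p).erase k, e (n - i)
      = ∏ i ∈ (range p).erase k, g ((n : ZMod p) - i) := by
        refine prod_congr rfl fun i hi => ?_
        obtain ⟨hik, hip⟩ := mem_erase.mp hi
        rw [hg (by push_cast; rwa [hnk, sub_ne_zero, Ne, ZMod.natCast_eq_natCast_iff',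
          Nat.mod_eq_of_lt hk, Nat.mod_eq_of_lt (mem_range.mp hip), eq_comm])]
        push_cast
        rfl
    _ = ∏ i ∈ range p, g ((n : ZMod p) - i) := prod_erase _ (by simp [g, hnk])
    _ = ∏ r, g r := by
        rw [ZMod.prod_range_natCast p (fun r => g (n - r))]
        exact Fintype.prod_equiv (Equiv.subLeft (n : ZMod p)) _ _ fun _ => rfl
    _ = ∏ i ∈ range p, g i := (ZMod.prod_range_natCast p g).symm
    _ = ∏ j ∈ range (p - 1), e (j + 1) := by
        rw [hrange, prod_range_succ', Nat.cast_zero, show g 0 = 1 from if_pos rfl, mul_one]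
        refine prod_congr rfl fun j hj => ?_
        rw [hg]
        · push_cast; rfl
        · have := mem_range.mp hj
          exact_mod_cast (ZMod.natCast_eq_zero_iff _ _).not.mpr
            (Nat.not_dvd_of_pos_of_lt j.succ_pos (by omega))

theorem eval₂_eq_of_mul_prod_quantumInt_eq (hx : IsPrimitiveRoot (x : K) p) (hodd : Odd p)
    (hp : 1 < p) {n n₁ : ℤ} {k : ℕ} (hk : k < p) (hnk : n - k = p * n₁) {P : R[T;T⁻¹]}
    (hP : P * ∏ j ∈ range (p - 1), quantumInt 1 (j + 1) =
      quantumInt p n₁ * ∏ i ∈ (range p).erase k, quantumInt 1 (n - i)) :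
    eval₂ f x P = n₁ := by
  have : NeZero p := ⟨by omega⟩
  have hx1 : (x : K) - (x : K)⁻¹ ≠ 0 := by
    simpa using hx.zpow_sub_zpow_neg_ne_zero hodd (r := 1)
      (by exact_mod_cast Nat.not_dvd_of_pos_of_lt one_pos hp)
  have hxp : x ^ (p : ℤ) = 1 := Units.val_eq_one.mp (by simpa using hx.pow_eq_one)
  have hnk' : (n : ZMod p) = k :=
    by exact_mod_cast ((ZMod.intCast_eq_intCast_iff_dvd_sub _ _ _).mpr ⟨_, hnk⟩).symm
  have h := congrArg (eval₂ f x) hP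
  rw [map_mul, map_mul, map_prod, map_prod, eval₂_quantumInt_of_zpow_eq_one _ hxp,
    prod_erase_eval₂_quantumInt_sub f hx hx1 n hk hnk'] at h
  refine mul_right_cancel₀ (prod_ne_zero_iff.mpr fun j hj => ?_) h
  have := mem_range.mp hj
  exact eval₂_quantumInt_ne_zero f hx hodd
    (by exact_mod_cast Nat.not_dvd_of_pos_of_lt j.succ_pos (by omega))

end Field

end LaurentPolynomial

def qUnit : Fqˣ := Units.mk0 q RatFunc.X_ne_zero

@[simp]
theorem coe_qUnit : (qUnit : Fq) = q := rfl

def evalQ : ℂ[T;T⁻¹] →+* Fq := eval₂ (algebraMap ℂ Fq) qUnit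

theorem evalQ_injective : Function.Injective evalQ := eval₂_algebraMap_X_injective

theorem evalQ_quantumInt_one (m : ℤ) : evalQ (quantumInt 1 m) = qint m := by
  have hD : (q - q⁻¹ : Fq) ≠ 0 := by
    simpa [evalQ] using (map_ne_zero_iff _ evalQ_injective).mpr
      (T_sub_T_neg_ne_zero (R := ℂ) one_ne_zero)
  rw [qint, eq_div_iff hD]
  simpa [evalQ] using eval₂_quantumInt_mul (algebraMap ℂ Fq) qUnit 1 m

theorem qint_ne_zero {m : ℤ} (hm : m ≠ 0) : qint m ≠ 0 := by
  rw [← evalQ_quantumInt_one, map_ne_zero_iff _ evalQ_injective]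
  exact quantumInt_ne_zero one_ne_zero hm

theorem qfact_eq_prod (k : ℕ) : qfact k = ∏ j ∈ range k, qint (j + 1) := by
  induction k with
  | zero => rfl
  | succ k ih => rw [qfact, ih, prod_range_succ, mul_comm]

theorem mul_prod_quantumInt_eq_of_evalQ_eq_qbinom {P : ℂ[T;T⁻¹]} {n : ℤ} {k : ℕ}
    (hP : evalQ P = qbinom n k) :
    P * ∏ j ∈ range k, quantumInt 1 (j + 1) = ∏ i ∈ range k, quantumInt 1 (n - i) := by
  have hfact : qfact k ≠ 0 := by
    rw [qfact_eq_prod]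
    exact prod_ne_zero_iff.mpr fun j _ => qint_ne_zero (by omega)
  apply evalQ_injective
  simp only [map_mul, map_prod, evalQ_quantumInt_one, hP, qbinom, ← qfact_eq_prod]
  rw [if_neg (by omega), Int.toNat_natCast, div_mul_cancel₀ _ hfact]

/-- Let `ε` be a primitive `p`-th root of unity with `p` odd, `p > 1`. For any
integer `n`, writing `n = n₀ + p·n₁` with `0 ≤ n₀ < p` (so `n₁ = n.ediv p`),
the balanced Gaussian binomial `[n choose p]_q`, which is a Laurent polynomial
`∑ i, cᵢ qⁱ`, evaluates at `q = ε` to `n₁`. -/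
theorem qbinom_p_at_root_of_unity (p : ℕ) (hodd : Odd p) (hp : 1 < p)
    (ε : ℂ) (hε : IsPrimitiveRoot ε p) (n : ℤ) (c : ℤ →₀ ℂ)
    (hc : qbinom n p = c.sum fun i a => algebraMap ℂ Fq a * q ^ i) :
    (c.sum fun i a => a * ε ^ i) = ((n.ediv p : ℤ) : ℂ) := by
  obtain ⟨k, hk, hnk⟩ : ∃ k : ℕ, k < p ∧ n - k = p * n.ediv p :=
    ⟨(n % p).toNat, by have := Int.emod_lt_of_pos n (by omega : (0 : ℤ) < p); omega, by
      rw [Int.toNat_of_nonneg (Int.emod_nonneg n (by omega)), Int.emod_def]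
      exact sub_sub_cancel _ _⟩
  set P : ℂ[T;T⁻¹] := AddMonoidAlgebra.ofCoeff c
  have hPq : evalQ P = qbinom n p := by
    rw [hc, evalQ, eval₂_ofCoeff]
    simp
  have hL : P * ∏ j ∈ range (p - 1), quantumInt 1 (j + 1) =
      quantumInt p (n.ediv p) * ∏ i ∈ (range p).erase k, quantumInt 1 (n - i) := by
    apply mul_left_cancel₀ (quantumInt_ne_zero (R := ℂ) one_ne_zero (by omega : (p : ℤ) ≠ 0))
    have h := mul_prod_quantumInt_eq_of_evalQ_eq_qbinom hPq
    have hrange : range p = range (p - 1 + 1) := by rw [Nat.sub_add_cancel hp.le]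
    rw [prod_quantumInt_sub_eq_mul_prod_erase hk hnk, hrange, prod_range_succ,
      show ((p - 1 : ℕ) : ℤ) + 1 = p by omega, ← hrange] at h
    linear_combination h
  have := eval₂_eq_of_mul_prod_quantumInt_eq (RingHom.id ℂ) (x := (hε.isUnit (by omega)).unit)
    hε hodd hp hk hnk hL
  simpa [P, eval₂_ofCoeff] using this
end
end

section
/- In the q-boson algebra with a a⁺ - q² a⁺ a = 1, one has for all n, m ≥ 0: aⁿ · a⁺^(m) = Σ_{s=0}^{m} q^{n(s+m)} q^{(s-m)(s+m+1)/2} [n choose m-s]_q a⁺^(s) a^{n-m+s}, where a^(k) = a^k/[k]_q! and a⁺^(k) = (a⁺)^k/[k]_q!, and terms with negative exponent n-m+s are interpreted via the convention that [n choose m-s]_q = 0 when m-s > n. -/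
noncomputable section

/-!
Induct on `n`. Moving one `a` to the right through `a⁺^(m+1)` gives
`a a⁺^(m+1) = q^{2(m+1)} a⁺^(m+1) a + q^m a⁺^(m)`, hence
`a^{n+1} a⁺^(m+1) = q^{2(m+1)} (aⁿ a⁺^(m+1)) a + q^m aⁿ a⁺^(m)`. Expanding both products by
induction, the coefficients recombine through the q-Pascal rule
`q^{n+1-k} [n+1 choose k] = q^{n+1} [n choose k] + [n choose k-1]`.
-/

open Finset

lemma q_ne_zero : q ≠ 0 := RatFunc.X_ne_zero

lemma q_pow_ne_one {k : ℕ} (hk : k ≠ 0) : q ^ k ≠ 1 := by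
  intro h
  have : (Polynomial.X : Polynomial ℂ) ^ k = 1 :=
    IsFractionRing.injective (Polynomial ℂ) Fq <| by
      rw [map_pow, map_one, RatFunc.algebraMap_X]; exact h
  simpa [hk] using congrArg Polynomial.natDegree this

lemma q_sub_inv_ne_zero : q - q⁻¹ ≠ 0 := by
  rw [sub_ne_zero]
  intro h
  apply q_pow_ne_one two_ne_zero
  rw [sq]
  nth_rewrite 2 [h]
  exact mul_inv_cancel₀ q_ne_zero

lemma qint_ne_zero_s3 {k : ℤ} (hk : 0 < k) : qint k ≠ 0 := by
  refine div_ne_zero (sub_ne_zero.mpr fun h => ?_) q_sub_inv_ne_zero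
  lift k to ℕ using hk.le
  have hsq : q ^ (k : ℤ) * q ^ (k : ℤ) = 1 := by
    nth_rewrite 2 [h]
    rw [← zpow_add₀ q_ne_zero, add_neg_cancel, zpow_zero]
  apply q_pow_ne_one (k := 2 * k) (by omega)
  rw [two_mul, pow_add]
  exact_mod_cast hsq

lemma qint_zero : qint 0 = 0 := by simp [qint]

lemma qint_one : qint 1 = 1 := by simp [qint, div_self q_sub_inv_ne_zero]

lemma zpow_mul_qint (n k : ℤ) : q ^ k * qint n = qint (n - k) + q ^ n * qint k := by
  simp only [qint, ← mul_div_assoc, ← add_div]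
  congr 1
  simp only [neg_sub, zpow_sub₀ q_ne_zero, zpow_neg]
  field_simp [zpow_ne_zero k q_ne_zero, zpow_ne_zero n q_ne_zero]
  ring

lemma qfact_succ (n : ℕ) : qfact (n + 1) = qint (n + 1) * qfact n := rfl

lemma qfact_ne_zero (n : ℕ) : qfact n ≠ 0 := by
  induction n with
  | zero => exact one_ne_zero
  | succ n ih => exact mul_ne_zero (qint_ne_zero_s3 (by positivity)) ih

lemma qbinom_of_neg (n : ℤ) {k : ℤ} (hk : k < 0) : qbinom n k = 0 := if_pos hk

lemma qbinom_zero_right (n : ℤ) : qbinom n 0 = 1 := by simp [qbinom, qfact]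

lemma qbinom_natCast_of_lt {n : ℕ} {k : ℤ} (hk : n < k) : qbinom n k = 0 := by
  rw [qbinom, if_neg (by omega), prod_eq_zero (i := n) (by simp; omega) (by simp [qint_zero]),
    zero_div]

lemma qbinom_natCast_succ (n : ℤ) (t : ℕ) :
    qbinom n (t + 1) = (∏ i ∈ range (t + 1), qint (n - i)) / qfact (t + 1) := by
  rw [qbinom, if_neg (by omega)]
  norm_cast

lemma qbinom_succ_right (n : ℤ) (t : ℕ) :
    qbinom n (t + 1) = qint (n - t) / qint (t + 1) * qbinom n t := by
  rw [qbinom_natCast_succ, prod_range_succ, qfact_succ, qbinom, if_neg (by omega),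
    Int.toNat_natCast]
  field_simp [qint_ne_zero_s3 (k := t + 1) (by omega), qfact_ne_zero]

lemma qbinom_succ_succ (n : ℤ) (t : ℕ) :
    qbinom (n + 1) (t + 1) = qint (n + 1) / qint (t + 1) * qbinom n t := by
  rw [qbinom_natCast_succ, prod_range_succ', qfact_succ, qbinom, if_neg (by omega),
    Int.toNat_natCast]
  simp only [Nat.cast_add, Nat.cast_one, add_sub_add_right_eq_sub, Nat.cast_zero, sub_zero]
  field_simp [qint_ne_zero_s3 (k := t + 1) (by omega), qfact_ne_zero]

lemma qbinom_pascal (n k : ℤ) :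
    q ^ (n + 1 - k) * qbinom (n + 1) k = q ^ (n + 1) * qbinom n k + qbinom n (k - 1) := by
  rcases lt_trichotomy k 0 with hk | rfl | hk
  · simp [qbinom_of_neg _ hk, qbinom_of_neg _ (by omega : k - 1 < 0)]
  · simp [qbinom_zero_right, qbinom_of_neg n (by norm_num : (-1 : ℤ) < 0)]
  · obtain ⟨t, rfl⟩ : ∃ t : ℕ, k = t + 1 := ⟨(k - 1).toNat, by omega⟩
    have hshift := zpow_mul_qint (n + 1) (n - t)
    rw [show n + 1 - (n - t) = t + 1 by ring] at hshift
    rw [add_sub_cancel_right, qbinom_succ_succ, qbinom_succ_right,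
      show n + 1 - ((t : ℤ) + 1) = n - t by ring]
    field_simp [qint_ne_zero_s3 (k := t + 1) (by omega)]
    linear_combination qbinom n t * hshift

lemma q_pow_add_q_pow_mul_qint (m : ℕ) :
    q ^ (2 * (m + 1)) + q ^ m * qint (m + 1) = q ^ (m + 1) * qint (m + 2) := by
  have hshift := zpow_mul_qint (m + 1) (-1)
  have hneg : qint (-1) = -1 := by
    rw [qint, neg_neg, zpow_one, zpow_neg_one, ← neg_sub]
    exact neg_div_self q_sub_inv_ne_zero
  have hcast : (q : Fq) ^ ((m : ℤ) + 1) = q ^ (m + 1) := by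
    exact_mod_cast zpow_natCast q (m + 1)
  rw [sub_neg_eq_add, add_assoc, one_add_one_eq_two, hneg, hcast] at hshift
  have hm : (q : Fq) ^ m = q ^ (m + 1) * q ^ (-1 : ℤ) := by
    rw [zpow_neg_one, pow_succ, mul_inv_cancel_right₀ q_ne_zero]
  rw [hm, mul_assoc, hshift]
  ring

def bosonCoeff (m n s : ℕ) : Fq :=
  q ^ ((n : ℤ) * ((s : ℤ) + m)) * q ^ ((((s : ℤ) - m) * ((s : ℤ) + m + 1)) / 2) *
    qbinom n ((m : ℤ) - s)

lemma bosonCoeff_of_lt {m n s : ℕ} (hs : n + s < m) : bosonCoeff m n s = 0 := by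
  rw [bosonCoeff, qbinom_natCast_of_lt (by omega), mul_zero]

lemma bosonCoeff_of_gt {m n s : ℕ} (hs : m < s) : bosonCoeff m n s = 0 := by
  rw [bosonCoeff, qbinom_of_neg _ (by omega), mul_zero]

lemma bosonCoeff_zero_self (m : ℕ) : bosonCoeff m 0 m = 1 := by
  simp [bosonCoeff, qbinom_zero_right]

lemma bosonCoeff_zero_zero (n : ℕ) : bosonCoeff 0 n 0 = 1 := by
  simp [bosonCoeff, qbinom_zero_right]

lemma bosonCoeff_succ_succ (m n s : ℕ) :
    bosonCoeff (m + 1) (n + 1) s =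
      q ^ (2 * (m + 1)) * bosonCoeff (m + 1) n s + q ^ m * bosonCoeff m n s := by
  have hexp : (((s : ℤ) - m) * ((s : ℤ) + m + 1)) / 2 =
      (((s : ℤ) - (m + 1)) * ((s : ℤ) + (m + 1) + 1)) / 2 + (m + 1) := by
    rw [← Int.add_mul_ediv_right _ _ two_ne_zero]
    ring_nf
  have hpascal := qbinom_pascal n (m + 1 - s)
  rw [show (m : ℤ) + 1 - s - 1 = m - s by ring] at hpascal
  simp only [bosonCoeff, hexp, ← zpow_natCast, ← mul_assoc, ← zpow_add₀ q_ne_zero]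
  push_cast
  set e := (((s : ℤ) - (m + 1)) * ((s : ℤ) + (m + 1) + 1)) / 2
  calc
    _ = q ^ (n * (s + m) + e + 2 * m + 1 : ℤ) *
        (q ^ (n + 1 - (m + 1 - s) : ℤ) * qbinom (n + 1) (m + 1 - s)) := by
      rw [← mul_assoc, ← zpow_add₀ q_ne_zero]
      ring_nf
    _ = _ := by
      rw [hpascal, mul_add, ← mul_assoc, ← zpow_add₀ q_ne_zero]
      ring_nf

lemma bosonCoeff_smul_mul_pow_succ {A : Type*} [Semiring A] [Module Fq A] (m n s : ℕ) (x y : A) :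
    bosonCoeff m n s • (x * y ^ (n + s - m) * y) =
      bosonCoeff m n s • (x * y ^ (n + 1 + s - m)) := by
  rcases lt_or_ge (n + s) m with hs | hs
  · rw [bosonCoeff_of_lt hs, zero_smul, zero_smul]
  · rw [mul_assoc, ← pow_succ, show n + s - m + 1 = n + 1 + s - m by omega]

section QBoson

variable {A : Type*} [Ring A] [Algebra Fq A] {a ap : A}

def qDividedPow (x : A) (k : ℕ) : A := (qfact k)⁻¹ • x ^ k

lemma qDividedPow_zero (x : A) : qDividedPow x 0 = 1 := by simp [qDividedPow, qfact]

lemma mul_pow_succ_of_qboson (h : a * ap - (q ^ 2 : Fq) • (ap * a) = 1) (m : ℕ) :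
    a * ap ^ (m + 1) = (q ^ (2 * (m + 1)) : Fq) • (ap ^ (m + 1) * a) +
      (q ^ m * qint (m + 1)) • ap ^ m := by
  have hrel : a * ap = (q ^ 2 : Fq) • (ap * a) + 1 := eq_add_of_sub_eq' h
  induction m with
  | zero => simpa [qint_one] using hrel
  | succ m ih =>
    calc a * ap ^ (m + 2) = (a * ap ^ (m + 1)) * ap := by rw [pow_succ _ (m + 1), mul_assoc]
      _ = (q ^ (2 * (m + 1)) : Fq) • (ap ^ (m + 1) * (q ^ 2 • (ap * a) + 1)) +
          (q ^ m * qint (m + 1)) • ap ^ (m + 1) := by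
        rw [ih, add_mul, smul_mul_assoc, smul_mul_assoc, mul_assoc, ← pow_succ, hrel]
      _ = (q ^ (2 * (m + 1)) * q ^ 2 : Fq) • (ap ^ (m + 2) * a) +
          (q ^ (2 * (m + 1)) + q ^ m * qint (m + 1)) • ap ^ (m + 1) := by
        rw [mul_add (ap ^ (m + 1)), mul_one, mul_smul_comm, ← mul_assoc, ← pow_succ, smul_add,
          smul_smul, add_smul]
        abel
      _ = _ := by
        rw [q_pow_add_q_pow_mul_qint, ← pow_add]
        push_cast
        ring_nf

lemma mul_qDividedPow_succ_of_qboson (h : a * ap - (q ^ 2 : Fq) • (ap * a) = 1) (m : ℕ) :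
    a * qDividedPow ap (m + 1) =
      (q ^ (2 * (m + 1)) : Fq) • (qDividedPow ap (m + 1) * a) +
        (q ^ m : Fq) • qDividedPow ap m := by
  have hm : (qfact (m + 1))⁻¹ * (q ^ m * qint (m + 1)) = q ^ m * (qfact m)⁻¹ := by
    rw [qfact_succ]
    field_simp [qint_ne_zero_s3 (k := m + 1) (by omega), qfact_ne_zero]
  simp only [qDividedPow, mul_smul_comm, smul_mul_assoc, mul_pow_succ_of_qboson h, smul_add,
    smul_smul, hm, mul_comm]

lemma pow_mul_qDividedPow_of_qboson (h : a * ap - (q ^ 2 : Fq) • (ap * a) = 1) (n m : ℕ) :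
    a ^ n * qDividedPow ap m =
      ∑ s ∈ range (m + 1), bosonCoeff m n s • (qDividedPow ap s * a ^ (n + s - m)) := by
  induction n generalizing m with
  | zero =>
    rw [pow_zero, one_mul, sum_eq_single_of_mem m (self_mem_range_succ m)
      fun s hs hsm => by rw [bosonCoeff_of_lt (by simp at hs; omega), zero_smul]]
    simp [bosonCoeff_zero_self]
  | succ n ih =>
    cases m with
    | zero => simp [qDividedPow_zero, bosonCoeff_zero_zero]
    | succ m =>
      have hraise : ∑ s ∈ range (m + 2), (q ^ (2 * (m + 1)) * bosonCoeff (m + 1) n s) •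
            (qDividedPow ap s * a ^ (n + 1 + s - (m + 1))) =
          (q ^ (2 * (m + 1)) : Fq) • (a ^ n * qDividedPow ap (m + 1) * a) := by
        simp only [ih, sum_mul, smul_sum, smul_mul_assoc, bosonCoeff_smul_mul_pow_succ, smul_smul]
      have hlower : ∑ s ∈ range (m + 2), (q ^ m * bosonCoeff m n s) •
            (qDividedPow ap s * a ^ (n + 1 + s - (m + 1))) =
          (q ^ m : Fq) • (a ^ n * qDividedPow ap m) := by
        rw [sum_range_succ, bosonCoeff_of_gt (by omega), mul_zero, zero_smul, add_zero, ih,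
          smul_sum]
        refine sum_congr rfl fun s _ => ?_
        rw [smul_smul, show n + 1 + s - (m + 1) = n + s - m by omega]
      rw [pow_succ, mul_assoc, mul_qDividedPow_succ_of_qboson h, mul_add, mul_smul_comm,
        mul_smul_comm, ← mul_assoc, ← hraise, ← hlower, ← sum_add_distrib]
      simp only [bosonCoeff_succ_succ, add_smul]

end QBoson

/-- In the q-boson algebra (an associative `ℂ(q)`-algebra generated by `a`, `a⁺`
with `a a⁺ - q² a⁺ a = 1`), for all `n, m ≥ 0`:
`aⁿ · a⁺^(m) = Σ_{s=0}^{m} q^{n(s+m)} q^{(s-m)(s+m+1)/2} [n choose m-s]_q a⁺^(s) a^{n-m+s}`,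
where `a⁺^(k) = (a⁺)^k/[k]_q!`.  (Terms with `m - s > n` have coefficient
`[n choose m-s]_q = 0`, so the truncated exponent `n + s - m` is harmless.) -/
theorem qboson_pow_mul_divided_pow {A : Type*} [Ring A] [Algebra Fq A]
    (a ap : A) (h : a * ap - (q ^ 2 : Fq) • (ap * a) = 1) (n m : ℕ) :
    a ^ n * ((qfact m)⁻¹ • ap ^ m) =
      ∑ s ∈ Finset.range (m + 1),
        (q ^ ((n : ℤ) * ((s : ℤ) + m)) *
         q ^ ((((s : ℤ) - m) * ((s : ℤ) + m + 1)) / 2) *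
         qbinom n ((m : ℤ) - s)) •
          (((qfact s)⁻¹ • ap ^ s) * a ^ (n + s - m)) :=
  pow_mul_qDividedPow_of_qboson h n m
end
end

section
/- Let ε be a primitive p-th root of unity (p odd, p > 1), m ∈ N, and let V_m be the complex vector space with basis v₀,…,v_m equipped with operators K v_r = ε^{m-2r} v_r, e v_r = [m-r+1]_ε v_{r-1}, f v_r = [r+1]_ε v_{r+1}, E v_r = ((m-r)₁ + 1) v_{r-p}, F v_r = (r₁+1) v_{r+p} (where for an integer n, n = n₀ + p n₁ with 0 ≤ n₀ < p, vectors with out-of-range indices are zero, and E, F are the actions of the divided powers e^(p), f^(p)). Write m = m₀ + p m₁ with 0 ≤ m₀ < p. If m < p or m₀ = p - 1, then V_m has no nonzero proper subspace invariant under all five operators. -/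
noncomputable section

/-- The balanced quantum integer `[n]_ε = (ε^n - ε^{-n})/(ε - ε^{-1})`. -/
def qintC (ε : ℂ) (n : ℤ) : ℂ := (ε ^ n - ε ^ (-n)) / (ε - ε⁻¹)

/-- The basis vector `v_i` of the Weyl module `V_m` (zero for out-of-range `i`). -/
def wv (m : ℕ) (i : ℤ) : Fin (m + 1) → ℂ :=
  if h : 0 ≤ i ∧ i ≤ m then Pi.single (⟨i.toNat, by omega⟩ : Fin (m + 1)) 1 else 0

def cf (m : ℕ) (x : Fin (m+1) → ℂ) (k : ℤ) : ℂ :=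
  if h : 0 ≤ k ∧ k ≤ m then x ⟨k.toNat, by omega⟩ else 0

lemma wv_apply (m : ℕ) (t : ℤ) (j : Fin (m+1)) :
    wv m t j = if t = (j:ℤ) then 1 else 0 := by
  unfold wv
  split_ifs with h h2 h2
  · rw [Pi.single_apply, if_pos (Fin.ext (by simp only [Fin.val_mk]; omega))]
  · rw [Pi.single_apply, if_neg]
    intro hc
    apply h2
    rw [hc]
    simp only [Fin.val_mk]
    omega
  · exfalso
    have : 0 ≤ (j:ℤ) := by positivity
    have : (j:ℤ) ≤ m := by exact_mod_cast Nat.lt_succ_iff.mp j.isLt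
    omega
  · rfl

lemma cf_apply (m : ℕ) (x : Fin (m+1) → ℂ) (j : Fin (m+1)) : cf m x (j:ℤ) = x j := by
  unfold cf
  rw [dif_pos ⟨by positivity, by exact_mod_cast Nat.lt_succ_iff.mp j.isLt⟩]
  exact congrArg x (Fin.ext (by simp only [Fin.val_mk]; omega))

lemma sum_wv (m : ℕ) (x : Fin (m+1) → ℂ) : ∑ i, x i • wv m (i:ℤ) = x := by
  funext j
  simp only [Finset.sum_apply, Pi.smul_apply, wv_apply, smul_eq_mul]
  rw [Finset.sum_eq_single j]
  · simp
  · intro i _ hij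
    rw [if_neg (fun hc => hij (Fin.ext (by exact_mod_cast hc))), mul_zero]
  · simp

lemma shift_apply (m : ℕ) (T : (Fin (m+1) → ℂ) →ₗ[ℂ] (Fin (m+1) → ℂ)) (d : ℤ) (coef : ℤ → ℂ)
    (hT : ∀ r : ℤ, 0 ≤ r → r ≤ m → T (wv m r) = coef r • wv m (r + d))
    (x : Fin (m+1) → ℂ) (j : Fin (m+1)) :
    T x j = coef ((j:ℤ) - d) * cf m x ((j:ℤ) - d) := by
  conv_lhs => rw [← sum_wv m x]
  rw [map_sum]
  have hrw : ∀ i : Fin (m+1), T (x i • wv m (i:ℤ)) = (x i * coef i) • wv m ((i:ℤ) + d) := by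
    intro i
    rw [map_smul, hT i (by positivity) (by exact_mod_cast Nat.lt_succ_iff.mp i.isLt),
      smul_smul]
  simp only [hrw]
  simp only [Finset.sum_apply, Pi.smul_apply, wv_apply, smul_eq_mul]
  unfold cf
  split_ifs with h
  · rw [Finset.sum_eq_single (⟨((j:ℤ)-d).toNat, by omega⟩ : Fin (m+1))]
    · have hi : (((⟨((j:ℤ)-d).toNat, by omega⟩ : Fin (m+1)) : ℕ) : ℤ) = (j:ℤ) - d := by
        simp only [Fin.val_mk]; omega
      simp only [hi, sub_add_cancel]
      rw [if_true, mul_one]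
      ring
    · intro i _ hij
      rw [if_neg, mul_zero]
      intro hc
      exact hij (Fin.ext (by simp only [Fin.val_mk]; omega))
    · simp
  · rw [mul_zero]
    apply Finset.sum_eq_zero
    intro i _
    rw [if_neg, mul_zero]
    intro hc
    have h1 : 0 ≤ (i:ℤ) := by positivity
    have h2 : (i:ℤ) ≤ m := by exact_mod_cast Nat.lt_succ_iff.mp i.isLt
    omega

lemma cf_ne {m : ℕ} (x : Fin (m+1) → ℂ) (k : ℤ) (h : cf m x k ≠ 0) :
    ∃ i : Fin (m+1), (i:ℤ) = k ∧ x i ≠ 0 := by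
  unfold cf at h
  split_ifs at h with hr
  · exact ⟨⟨k.toNat, by omega⟩, by simp only [Fin.val_mk]; omega, h⟩
  · exact absurd rfl h

lemma int_dvd_cancel_two {p : ℕ} (hodd : Odd p) {n : ℤ} (h : (p:ℤ) ∣ 2 * n) : (p:ℤ) ∣ n := by
  rw [← Int.natAbs_dvd_natAbs] at h ⊢
  rw [Int.natAbs_mul] at h
  exact (Nat.Coprime.dvd_of_dvd_mul_left (Odd.coprime_two_right hodd) h)

lemma zpow_eq_dvd {p : ℕ} {ε : ℂ} (hp : 1 < p) (hε : IsPrimitiveRoot ε p) {a b : ℤ}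
    (h : ε ^ a = ε ^ b) : (p:ℤ) ∣ (a - b) := by
  have h0 : ε ≠ 0 := hε.ne_zero (by omega)
  have h1 : ε ^ (a - b) = 1 := by
    rw [zpow_sub₀ h0, h, div_self (zpow_ne_zero _ h0)]
  exact (hε.zpow_eq_one_iff_dvd _).mp h1

lemma qint_ne {p : ℕ} {ε : ℂ} (hodd : Odd p) (hp : 1 < p) (hε : IsPrimitiveRoot ε p)
    {n : ℤ} (hn : ¬ (p:ℤ) ∣ n) : qintC ε n ≠ 0 := by
  apply div_ne_zero
  · rw [sub_ne_zero]
    intro hEq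
    have h1 := zpow_eq_dvd hp hε hEq
    exact hn (int_dvd_cancel_two hodd (by rwa [show n - -n = 2*n by ring] at h1))
  · rw [sub_ne_zero]
    intro hEq
    have h1 : ε ^ (1:ℤ) = ε ^ (-1:ℤ) := by
      rw [zpow_one, zpow_neg_one]; exact hEq
    have h2 := zpow_eq_dvd hp hε h1
    have h3 : (p:ℤ) ∣ 2 := by rwa [show (1:ℤ) - -1 = 2 by ring] at h2
    have h4 : p ∣ 2 := by exact_mod_cast h3
    have h5 := Nat.le_of_dvd (by norm_num) h4
    have h6 := Nat.odd_iff.mp hodd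
    omega

lemma eig_ne {p : ℕ} {ε : ℂ} (hodd : Odd p) (hp : 1 < p) (hε : IsPrimitiveRoot ε p)
    {m : ℕ} (i j : Fin (m+1)) (hij : (i:ℕ) % p ≠ (j:ℕ) % p) :
    ε ^ ((m:ℤ) - 2*(i:ℤ)) ≠ ε ^ ((m:ℤ) - 2*(j:ℤ)) := by
  intro hEq
  have hd := zpow_eq_dvd hp hε hEq
  have hd2 : (p:ℤ) ∣ (j:ℤ) - (i:ℤ) :=
    int_dvd_cancel_two hodd (by rwa [show (m:ℤ) - 2*i - ((m:ℤ) - 2*j) = 2*((j:ℤ)-(i:ℤ)) by ring] at hd)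
  apply hij
  have h3 : ((i:ℕ):ℤ) % p = ((j:ℕ):ℤ) % p := Int.modEq_iff_dvd.mpr hd2
  have h4 : (((i:ℕ) % p : ℕ) : ℤ) = (((j:ℕ) % p : ℕ) : ℤ) := by push_cast; exact h3
  exact_mod_cast h4

section claims

variable {p : ℕ} {ε : ℂ} {m : ℕ} {W : Submodule ℂ (Fin (m+1) → ℂ)}

lemma smul_mem_cancel {c : ℂ} {v : Fin (m+1) → ℂ} (hc : c ≠ 0) (h : c • v ∈ W) : v ∈ W := by
  have h2 := W.smul_mem c⁻¹ h
  rwa [inv_smul_smul₀ hc] at h2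

lemma claimA (hodd : Odd p) (hp : 1 < p) (hε : IsPrimitiveRoot ε p)
    (K : (Fin (m+1) → ℂ) →ₗ[ℂ] (Fin (m+1) → ℂ))
    (hK : ∀ r : ℤ, 0 ≤ r → r ≤ m → K (wv m r) = ε ^ ((m:ℤ) - 2*r) • wv m r)
    (hWK : ∀ x ∈ W, K x ∈ W) :
    ∀ n : ℕ, ∀ x, x ∈ W → x ≠ 0 →
      (Finset.univ.filter (fun i => x i ≠ 0)).card ≤ n →
    ∃ y, y ∈ W ∧ y ≠ 0 ∧ ∀ i j : Fin (m+1), y i ≠ 0 → y j ≠ 0 → (i:ℕ) % p = (j:ℕ) % p := by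
  classical
  have hKx : ∀ (x : Fin (m+1) → ℂ) (k : Fin (m+1)),
      K x k = ε ^ ((m:ℤ) - 2*(k:ℤ)) * x k := by
    intro x k
    have h := shift_apply m K 0 (fun r => ε ^ ((m:ℤ) - 2*r))
      (fun r h1 h2 => by rw [add_zero]; exact hK r h1 h2) x k
    rwa [sub_zero, cf_apply] at h
  intro n
  induction n with
  | zero =>
    intro x hx hx0 hcard
    exfalso
    obtain ⟨i, hi⟩ := Function.ne_iff.mp hx0
    have hmem : i ∈ Finset.univ.filter (fun k => x k ≠ 0) := by
      simp only [Finset.mem_filter, Finset.mem_univ, true_and]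
      simpa using hi
    have := Finset.card_pos.mpr ⟨i, hmem⟩
    omega
  | succ n IH =>
    intro x hx hx0 hcard
    by_cases hsame : ∀ i j : Fin (m+1), x i ≠ 0 → x j ≠ 0 → (i:ℕ) % p = (j:ℕ) % p
    · exact ⟨x, hx, hx0, hsame⟩
    push_neg at hsame
    obtain ⟨i, j, hxi, hxj, hij⟩ := hsame
    set y : Fin (m+1) → ℂ := K x - ε ^ ((m:ℤ) - 2*(j:ℤ)) • x with hy
    have hyW : y ∈ W := Submodule.sub_mem W (hWK x hx) (Submodule.smul_mem W _ hx)
    have hyk : ∀ k : Fin (m+1),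
        y k = (ε ^ ((m:ℤ) - 2*(k:ℤ)) - ε ^ ((m:ℤ) - 2*(j:ℤ))) * x k := by
      intro k
      simp only [hy, Pi.sub_apply, Pi.smul_apply, smul_eq_mul, hKx, sub_mul]
    have hyi : y i ≠ 0 := by
      rw [hyk]
      exact mul_ne_zero (sub_ne_zero.mpr (eig_ne hodd hp hε i j hij)) hxi
    have hy0 : y ≠ 0 := fun h => hyi (by simp [h])
    have hsub : Finset.univ.filter (fun k => y k ≠ 0) ⊆
        (Finset.univ.filter (fun k => x k ≠ 0)).erase j := by
      intro k hk
      simp only [Finset.mem_filter, Finset.mem_univ, true_and] at hk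
      rw [Finset.mem_erase]
      refine ⟨?_, ?_⟩
      · intro hkj
        apply hk
        rw [hkj, hyk]
        simp
      · simp only [Finset.mem_filter, Finset.mem_univ, true_and]
        intro hxk
        apply hk
        rw [hyk, hxk, mul_zero]
    have hjmem : j ∈ Finset.univ.filter (fun k => x k ≠ 0) := by
      simp only [Finset.mem_filter, Finset.mem_univ, true_and]
      exact hxj
    have hpos := Finset.card_pos.mpr ⟨j, hjmem⟩
    have hcard2 : (Finset.univ.filter (fun k => y k ≠ 0)).card ≤ n := by
      have h1 := Finset.card_le_card hsub
      rw [Finset.card_erase_of_mem hjmem] at h1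
      omega
    exact IH y hyW hy0 hcard2

lemma claimB (hodd : Odd p) (hp : 1 < p) (hε : IsPrimitiveRoot ε p)
    (F : (Fin (m+1) → ℂ) →ₗ[ℂ] (Fin (m+1) → ℂ))
    (hF : ∀ r : ℤ, 0 ≤ r → r ≤ m → F (wv m r) = ((r.ediv p + 1 : ℤ) : ℂ) • wv m (r + p))
    (hWF : ∀ x ∈ W, F x ∈ W) :
    ∀ n : ℕ, ∀ y, y ∈ W → y ≠ 0 →
      (∀ i j : Fin (m+1), y i ≠ 0 → y j ≠ 0 → (i:ℕ) % p = (j:ℕ) % p) →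
      (∀ i : Fin (m+1), y i ≠ 0 → m ≤ n + (i:ℕ)) →
    ∃ r : Fin (m+1), wv m ((r:ℕ):ℤ) ∈ W := by
  classical
  have hFx : ∀ (x : Fin (m+1) → ℂ) (k : Fin (m+1)),
      F x k = ((((k:ℤ) - p).ediv p + 1 : ℤ) : ℂ) * cf m x ((k:ℤ) - p) :=
    fun x k => shift_apply m F p (fun r => ((r.ediv p + 1 : ℤ) : ℂ)) hF x k
  have main : ∀ n : ℕ, ∀ y, y ∈ W → y ≠ 0 →
      (∀ i j : Fin (m+1), y i ≠ 0 → y j ≠ 0 → (i:ℕ) % p = (j:ℕ) % p) →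
      (∀ i : Fin (m+1), y i ≠ 0 → m ≤ n + (i:ℕ)) →
      ∃ r : Fin (m+1), wv m ((r:ℕ):ℤ) ∈ W := by
    intro n
    induction n with
    | zero =>
      intro y hyW hy0 hres hmeas
      obtain ⟨i0, hi0'⟩ := Function.ne_iff.mp hy0
      have hi0 : y i0 ≠ 0 := by simpa using hi0'
      by_cases hs : ∀ k, y k ≠ 0 → k = i0
      · -- singleton
        refine ⟨i0, ?_⟩
        have hrepr : y = y i0 • wv m ((i0:ℕ):ℤ) := by
          funext k
          rw [Pi.smul_apply, wv_apply, smul_eq_mul]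
          by_cases hk : k = i0
          · subst hk
            rw [if_pos rfl, mul_one]
          · rw [if_neg (fun hc => hk (Fin.ext (by exact_mod_cast hc.symm))), mul_zero]
            by_contra hne
            exact hk (hs k hne)
        rw [hrepr] at hyW
        exact smul_mem_cancel hi0 hyW
      · exfalso
        push_neg at hs
        obtain ⟨k, hk, hki0⟩ := hs
        obtain ⟨i, j, hyi, hyj, hlt⟩ :
            ∃ i j : Fin (m+1), y i ≠ 0 ∧ y j ≠ 0 ∧ (i:ℕ) < (j:ℕ) := by
          rcases Nat.lt_trichotomy (i0:ℕ) (k:ℕ) with h | h | h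
          · exact ⟨i0, k, hi0, hk, h⟩
          · exact absurd (Fin.ext h.symm) hki0
          · exact ⟨k, i0, hk, hi0, h⟩
        have hres2 := hres i j hyi hyj
        have hdvd : p ∣ (j:ℕ) - (i:ℕ) := (Nat.modEq_iff_dvd' (le_of_lt hlt)).mp hres2
        have hge := Nat.le_of_dvd (by omega) hdvd
        have hjm : (j:ℕ) ≤ m := Nat.lt_succ_iff.mp j.isLt
        have := hmeas i hyi
        omega
    | succ n IH =>
      intro y hyW hy0 hres hmeas
      obtain ⟨i0, hi0'⟩ := Function.ne_iff.mp hy0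
      have hi0 : y i0 ≠ 0 := by simpa using hi0'
      by_cases hs : ∀ k, y k ≠ 0 → k = i0
      · refine ⟨i0, ?_⟩
        have hrepr : y = y i0 • wv m ((i0:ℕ):ℤ) := by
          funext k
          rw [Pi.smul_apply, wv_apply, smul_eq_mul]
          by_cases hk : k = i0
          · subst hk
            rw [if_pos rfl, mul_one]
          · rw [if_neg (fun hc => hk (Fin.ext (by exact_mod_cast hc.symm))), mul_zero]
            by_contra hne
            exact hk (hs k hne)
        rw [hrepr] at hyW
        exact smul_mem_cancel hi0 hyW
      · push_neg at hs
        obtain ⟨k, hk, hki0⟩ := hs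
        obtain ⟨i, j, hyi, hyj, hlt⟩ :
            ∃ i j : Fin (m+1), y i ≠ 0 ∧ y j ≠ 0 ∧ (i:ℕ) < (j:ℕ) := by
          rcases Nat.lt_trichotomy (i0:ℕ) (k:ℕ) with h | h | h
          · exact ⟨i0, k, hi0, hk, h⟩
          · exact absurd (Fin.ext h.symm) hki0
          · exact ⟨k, i0, hk, hi0, h⟩
        have hres2 := hres i j hyi hyj
        have hdvd : p ∣ (j:ℕ) - (i:ℕ) := (Nat.modEq_iff_dvd' (le_of_lt hlt)).mp hres2
        have hge := Nat.le_of_dvd (by omega) hdvd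
        have hjm : (j:ℕ) ≤ m := Nat.lt_succ_iff.mp j.isLt
        have hip : (i:ℕ) + p ≤ m := by omega
        set z := F y with hz
        have hzW : z ∈ W := hWF y hyW
        set w : Fin (m+1) := ⟨(i:ℕ) + p, by omega⟩ with hw
        have hwv : ((w:ℕ):ℤ) = ((i:ℕ):ℤ) + p := by
          simp only [hw, Fin.val_mk]
          push_cast
          ring
        have hzw : z w ≠ 0 := by
          rw [hz, hFx]
          have harg : ((w:ℕ):ℤ) - p = ((i:ℕ):ℤ) := by rw [hwv]; ring
          rw [harg, cf_apply]
          apply mul_ne_zero _ hyi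
          rw [Int.cast_ne_zero]
          have : (0:ℤ) ≤ ((i:ℕ):ℤ).ediv p := Int.ediv_nonneg (by omega) (by omega)
          omega
        have hz0 : z ≠ 0 := fun h => hzw (by simp [h])
        have hz_supp : ∀ a : Fin (m+1), z a ≠ 0 →
            ∃ a' : Fin (m+1), ((a':ℕ):ℤ) = ((a:ℕ):ℤ) - p ∧ y a' ≠ 0 := by
          intro a ha
          rw [hz, hFx] at ha
          exact cf_ne y _ (mul_ne_zero_iff.mp ha).2
        have hzres : ∀ a b : Fin (m+1), z a ≠ 0 → z b ≠ 0 → (a:ℕ) % p = (b:ℕ) % p := by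
          intro a b ha hb
          obtain ⟨a', ha', hya⟩ := hz_supp a ha
          obtain ⟨b', hb', hyb⟩ := hz_supp b hb
          have h1 : (a:ℕ) = (a':ℕ) + p := by omega
          have h2 : (b:ℕ) = (b':ℕ) + p := by omega
          rw [h1, h2, Nat.add_mod_right, Nat.add_mod_right]
          exact hres a' b' hya hyb
        have hzmeas : ∀ a : Fin (m+1), z a ≠ 0 → m ≤ n + (a:ℕ) := by
          intro a ha
          obtain ⟨a', ha', hya⟩ := hz_supp a ha
          have := hmeas a' hya
          omega
        exact IH z hzW hz0 hzres hzmeas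
  exact main

lemma claimC (hodd : Odd p) (hp : 1 < p) (hε : IsPrimitiveRoot ε p)
    (f F : (Fin (m+1) → ℂ) →ₗ[ℂ] (Fin (m+1) → ℂ))
    (hf : ∀ r : ℤ, 0 ≤ r → r ≤ m → f (wv m r) = qintC ε (r + 1) • wv m (r + 1))
    (hF : ∀ r : ℤ, 0 ≤ r → r ≤ m → F (wv m r) = ((r.ediv p + 1 : ℤ) : ℂ) • wv m (r + p))
    (hWf : ∀ x ∈ W, f x ∈ W) (hWF : ∀ x ∈ W, F x ∈ W)
    (hcond : m < p ∨ m % p = p - 1) :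
    ∀ n : ℕ, ∀ r : ℕ, r ≤ m → m - r ≤ n → wv m (r:ℤ) ∈ W → wv m (m:ℤ) ∈ W := by
  intro n
  induction n with
  | zero =>
    intro r h1 h2 h3
    have : r = m := by omega
    subst this
    exact h3
  | succ n IH =>
    intro r h1 h2 h3
    rcases eq_or_lt_of_le h1 with heq | hlt
    · subst heq
      exact h3
    by_cases hd : p ∣ (r + 1)
    · -- use F
      have hrp : r + p ≤ m := by
        rcases hcond with hc | hc
        · exfalso
          have := Nat.le_of_dvd (by omega) hd
          omega
        · have hd2 : p ∣ m + 1 := by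
            have h1' := Nat.div_add_mod m p
            have h2' : p * (m / p + 1) = p * (m / p) + p := by ring
            exact ⟨m / p + 1, by omega⟩
          obtain ⟨a, ha⟩ := hd
          obtain ⟨b, hb⟩ := hd2
          have hab : a < b := by
            rcases Nat.lt_or_ge a b with h | h
            · exact h
            · exfalso
              have := Nat.mul_le_mul_left p h
              omega
          have hmul : p * (a + 1) ≤ p * b := Nat.mul_le_mul_left p hab
          have hexp : p * (a + 1) = p * a + p := by ring
          omega
      have h4 := hWF _ h3
      rw [hF r (by positivity) (by exact_mod_cast h1)] at h4
      have hco : (((r:ℤ).ediv p + 1 : ℤ) : ℂ) ≠ 0 := by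
        rw [Int.cast_ne_zero]
        have : (0:ℤ) ≤ (r:ℤ).ediv p := Int.ediv_nonneg (by omega) (by omega)
        omega
      have h5 := smul_mem_cancel hco h4
      have h6 : wv m ((r + p : ℕ) : ℤ) ∈ W := by push_cast; exact h5
      exact IH (r + p) hrp (by omega) h6
    · -- use f
      have h4 := hWf _ h3
      rw [hf r (by positivity) (by exact_mod_cast h1)] at h4
      have hco : qintC ε ((r:ℤ) + 1) ≠ 0 := by
        apply qint_ne hodd hp hε
        intro hdd
        apply hd
        have : ((p:ℤ)) ∣ ((r + 1 : ℕ) : ℤ) := by push_cast; exact hdd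
        exact_mod_cast this
      have h5 := smul_mem_cancel hco h4
      have h6 : wv m ((r + 1 : ℕ) : ℤ) ∈ W := by push_cast; exact h5
      exact IH (r + 1) (by omega) (by omega) h6

lemma claimD (hodd : Odd p) (hp : 1 < p) (hε : IsPrimitiveRoot ε p)
    (e E : (Fin (m+1) → ℂ) →ₗ[ℂ] (Fin (m+1) → ℂ))
    (he : ∀ r : ℤ, 0 ≤ r → r ≤ m → e (wv m r) = qintC ε ((m:ℤ) - r + 1) • wv m (r - 1))
    (hE : ∀ r : ℤ, 0 ≤ r → r ≤ m →
      E (wv m r) = ((((m:ℤ) - r).ediv p + 1 : ℤ) : ℂ) • wv m (r - p))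
    (hWe : ∀ x ∈ W, e x ∈ W) (hWE : ∀ x ∈ W, E x ∈ W)
    (hm : wv m (m:ℤ) ∈ W) :
    ∀ j : ℕ, j ≤ m → wv m ((m:ℤ) - j) ∈ W := by
  intro j
  induction j using Nat.strong_induction_on with
  | _ j IH =>
    intro hj
    rcases Nat.eq_zero_or_pos j with h0 | h1
    · subst h0
      simpa using hm
    by_cases hdvd : p ∣ j
    · -- use E
      have hjp : p ≤ j := Nat.le_of_dvd h1 hdvd
      have hprev : wv m ((m:ℤ) - ((j - p : ℕ):ℤ)) ∈ W := IH (j - p) (by omega) (by omega)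
      have hcast : ((j - p : ℕ) : ℤ) = (j:ℤ) - p := by omega
      rw [hcast] at hprev
      have h4 := hWE _ hprev
      rw [hE ((m:ℤ) - ((j:ℤ) - p)) (by omega) (by omega)] at h4
      rw [show (m:ℤ) - ((m:ℤ) - ((j:ℤ) - p)) = (j:ℤ) - p by ring] at h4
      have hco : ((((j:ℤ) - p).ediv p + 1 : ℤ) : ℂ) ≠ 0 := by
        rw [Int.cast_ne_zero]
        have : (0:ℤ) ≤ ((j:ℤ) - p).ediv p := Int.ediv_nonneg (by omega) (by omega)
        omega
      have h5 := smul_mem_cancel hco h4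
      rwa [show (m:ℤ) - ((j:ℤ) - p) - p = (m:ℤ) - j by ring] at h5
    · -- use e
      have hprev : wv m ((m:ℤ) - ((j - 1 : ℕ):ℤ)) ∈ W := IH (j - 1) (by omega) (by omega)
      have hcast : ((j - 1 : ℕ) : ℤ) = (j:ℤ) - 1 := by omega
      rw [hcast] at hprev
      have h4 := hWe _ hprev
      rw [he ((m:ℤ) - ((j:ℤ) - 1)) (by omega) (by omega)] at h4
      rw [show (m:ℤ) - ((m:ℤ) - ((j:ℤ) - 1)) + 1 = (j:ℤ) by ring] at h4
      have hco : qintC ε (j:ℤ) ≠ 0 := by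
        apply qint_ne hodd hp hε
        intro hdd
        exact hdvd (by exact_mod_cast hdd)
      have h5 := smul_mem_cancel hco h4
      rwa [show (m:ℤ) - ((j:ℤ) - 1) - 1 = (m:ℤ) - j by ring] at h5

end claims

/-- Let `ε` be a primitive `p`-th root of unity (`p` odd, `p > 1`), `m ∈ ℕ`, and
let `V_m = ℂ^{m+1}` with basis `v₀,…,v_m` carry the operators
`K v_r = ε^{m-2r} v_r`, `e v_r = [m-r+1]_ε v_{r-1}`, `f v_r = [r+1]_ε v_{r+1}`,
`e^(p) v_r = ((m-r)₁+1) v_{r-p}`, `f^(p) v_r = (r₁+1) v_{r+p}` (out-of-range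
vectors are zero; `n₁ = n.ediv p`).  If `m < p` or `m₀ = p - 1`, then `V_m` has
no nonzero proper subspace invariant under all five operators. -/
theorem weyl_module_irreducible (p : ℕ) (hodd : Odd p) (hp : 1 < p)
    (ε : ℂ) (hε : IsPrimitiveRoot ε p) (m : ℕ)
    (K e f E F : (Fin (m + 1) → ℂ) →ₗ[ℂ] (Fin (m + 1) → ℂ))
    (hK : ∀ r : ℤ, 0 ≤ r → r ≤ m → K (wv m r) = ε ^ ((m : ℤ) - 2 * r) • wv m r)
    (he : ∀ r : ℤ, 0 ≤ r → r ≤ m →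
      e (wv m r) = qintC ε ((m : ℤ) - r + 1) • wv m (r - 1))
    (hf : ∀ r : ℤ, 0 ≤ r → r ≤ m →
      f (wv m r) = qintC ε (r + 1) • wv m (r + 1))
    (hE : ∀ r : ℤ, 0 ≤ r → r ≤ m →
      E (wv m r) = ((((m : ℤ) - r).ediv p + 1 : ℤ) : ℂ) • wv m (r - p))
    (hF : ∀ r : ℤ, 0 ≤ r → r ≤ m →
      F (wv m r) = ((r.ediv p + 1 : ℤ) : ℂ) • wv m (r + p))
    (hcond : m < p ∨ m % p = p - 1) :
    ∀ W : Submodule ℂ (Fin (m + 1) → ℂ),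
      (∀ x ∈ W, K x ∈ W ∧ e x ∈ W ∧ f x ∈ W ∧ E x ∈ W ∧ F x ∈ W) →
      W = ⊥ ∨ W = ⊤ := by
  classical
  intro W hW
  by_cases hbot : W = ⊥
  · exact Or.inl hbot
  right
  obtain ⟨x, hxW, hx0⟩ := (Submodule.ne_bot_iff W).mp hbot
  obtain ⟨y, hyW, hy0, hyres⟩ := claimA hodd hp hε K hK (fun x hx => (hW x hx).1)
    (Finset.univ.filter (fun i => x i ≠ 0)).card x hxW hx0 le_rfl
  obtain ⟨r, hr⟩ := claimB hodd hp hε F hF (fun x hx => (hW x hx).2.2.2.2)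
    m y hyW hy0 hyres (fun i _ => by omega)
  have hm : wv m (m:ℤ) ∈ W := claimC hodd hp hε f F hf hF
    (fun x hx => (hW x hx).2.2.1) (fun x hx => (hW x hx).2.2.2.2) hcond
    m (r:ℕ) (Nat.lt_succ_iff.mp r.isLt) (by omega) hr
  have hall : ∀ i : Fin (m+1), wv m ((i:ℕ):ℤ) ∈ W := by
    intro i
    have hi : (i:ℕ) ≤ m := Nat.lt_succ_iff.mp i.isLt
    have h := claimD hodd hp hε e E he hE (fun x hx => (hW x hx).2.1)
      (fun x hx => (hW x hx).2.2.2.1) hm (m - (i:ℕ)) (by omega)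
    rwa [show (m:ℤ) - ((m - (i:ℕ) : ℕ):ℤ) = ((i:ℕ):ℤ) by omega] at h
  rw [eq_top_iff]
  intro v _
  rw [← sum_wv m v]
  exact Submodule.sum_mem W (fun i _ => Submodule.smul_mem W _ (hall i))
end
end

section
/- With the setup of the Weyl module V_m (basis v₀,…,v_m, operators K, e, f, e^(p), f^(p) as given, ε a primitive p-th root of unity, p odd > 1, m = m₀ + p m₁ with 0 ≤ m₀ < p): if m ≥ p and m₀ ≠ p - 1, then the subspace V' = span_C{v_r : m₀ < r₀ < p, r₁ < m₁} (where r = r₀ + p r₁, 0 ≤ r₀ < p) is a nonzero proper subspace invariant under K, e, f, e^(p), and f^(p). -/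
noncomputable section

lemma emod_eq (a b : ℤ) : a.emod b = a % b := rfl
lemma ediv_eq (a b : ℤ) : a.ediv b = a / b := rfl

lemma wv_out (m : ℕ) (i : ℤ) (h : i < 0 ∨ (m : ℤ) < i) : wv m i = 0 := by
  rw [wv, dif_neg]; omega

lemma wv_ne (m : ℕ) (i : ℤ) (h1 : 0 ≤ i) (h2 : i ≤ m) : wv m i ≠ 0 := by
  rw [wv, dif_pos ⟨h1, h2⟩]
  intro h
  have := congrFun h (⟨i.toNat, by omega⟩ : Fin (m + 1))
  simp [Pi.single_eq_same] at this

lemma qint_zero_s9 (p : ℕ) (ε : ℂ) (hε : IsPrimitiveRoot ε p) (n : ℤ)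
    (h : (p : ℤ) ∣ n) : qintC ε n = 0 := by
  have h1 : ε ^ n = 1 := (hε.zpow_eq_one_iff_dvd n).mpr h
  have h2 : ε ^ (-n) = 1 := (hε.zpow_eq_one_iff_dvd (-n)).mpr (dvd_neg.mpr h)
  rw [qintC, h1, h2, sub_self, zero_div]

lemma divmod_eq (p q s r : ℤ) (hp : 0 < p) (hs : 0 ≤ s) (hs' : s < p)
    (h : r = s + p * q) : r / p = q ∧ r % p = s := by
  subst h
  constructor
  · rw [Int.add_mul_ediv_left _ _ (by omega : p ≠ 0), Int.ediv_eq_zero_of_lt hs hs', zero_add]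
  · rw [Int.add_mul_emod_self_left, Int.emod_eq_of_lt hs hs']

/-- With the Weyl module setup (`ε` a primitive `p`-th root of unity, `p` odd
`> 1`, `m = m₀ + p m₁`, `0 ≤ m₀ < p`): if `m ≥ p` and `m₀ ≠ p - 1`, then
`V' = span{v_r : m₀ < r₀ < p, r₁ < m₁}` is a nonzero proper subspace invariant
under `K`, `e`, `f`, `e^(p)` and `f^(p)`. -/
theorem weyl_module_proper_submodule (p : ℕ) (hodd : Odd p) (hp : 1 < p)
    (ε : ℂ) (hε : IsPrimitiveRoot ε p) (m : ℕ)
    (K e f E F : (Fin (m + 1) → ℂ) →ₗ[ℂ] (Fin (m + 1) → ℂ))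
    (hK : ∀ r : ℤ, 0 ≤ r → r ≤ m → K (wv m r) = ε ^ ((m : ℤ) - 2 * r) • wv m r)
    (he : ∀ r : ℤ, 0 ≤ r → r ≤ m →
      e (wv m r) = qintC ε ((m : ℤ) - r + 1) • wv m (r - 1))
    (hf : ∀ r : ℤ, 0 ≤ r → r ≤ m →
      f (wv m r) = qintC ε (r + 1) • wv m (r + 1))
    (hE : ∀ r : ℤ, 0 ≤ r → r ≤ m →
      E (wv m r) = ((((m : ℤ) - r).ediv p + 1 : ℤ) : ℂ) • wv m (r - p))
    (hF : ∀ r : ℤ, 0 ≤ r → r ≤ m →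
      F (wv m r) = ((r.ediv p + 1 : ℤ) : ℂ) • wv m (r + p))
    (hm : p ≤ m) (hm0 : m % p ≠ p - 1) :
    let V' : Submodule ℂ (Fin (m + 1) → ℂ) :=
      Submodule.span ℂ {x | ∃ r : ℤ, 0 ≤ r ∧ r ≤ m ∧
        ((m : ℤ)).emod p < r.emod p ∧ r.emod p < p ∧
        r.ediv p < ((m : ℤ)).ediv p ∧ x = wv m r}
    V' ≠ ⊥ ∧ V' ≠ ⊤ ∧
      ∀ x ∈ V', K x ∈ V' ∧ e x ∈ V' ∧ f x ∈ V' ∧ E x ∈ V' ∧ F x ∈ V' := by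
  intro V'
  have hpz : (0 : ℤ) < (p : ℤ) := by exact_mod_cast Nat.lt_of_lt_of_le Nat.zero_lt_one hp.le
  obtain ⟨m1, m0, hm1def, hm0def, hmdec, hm0n, hm0lt⟩ :
      ∃ m1 m0 : ℤ, (m : ℤ) / p = m1 ∧ (m : ℤ) % p = m0 ∧ (m : ℤ) = m0 + p * m1 ∧
        0 ≤ m0 ∧ m0 < p :=
    ⟨_, _, rfl, rfl, (Int.emod_add_mul_ediv (m : ℤ) p).symm,
      Int.emod_nonneg _ (by omega), Int.emod_lt_of_pos _ hpz⟩
  have hm0cast : m0 = ((m % p : ℕ) : ℤ) := by rw [← hm0def]; push_cast; rfl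
  have hm0small : m0 ≤ (p : ℤ) - 2 := by
    have h1 : m % p < p := Nat.mod_lt _ (by omega)
    omega
  have hm1ge : 1 ≤ m1 := by
    rw [← hm1def, Int.le_ediv_iff_mul_le hpz]
    have : (p : ℤ) ≤ (m : ℤ) := by exact_mod_cast hm
    omega
  -- membership of generators
  have hmem : ∀ r : ℤ, 0 ≤ r → r ≤ m → m0 < r % p → r % p < p → r / p < m1 →
      wv m r ∈ V' := by
    intro r h1 h2 h3 h4 h5
    apply Submodule.subset_span
    refine ⟨r, h1, h2, ?_, ?_, ?_, rfl⟩
    · rw [emod_eq, emod_eq, hm0def]; exact h3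
    · rw [emod_eq]; exact h4
    · rw [ediv_eq, ediv_eq, hm1def]; exact h5
  -- the canonical nonzero generator
  have hgen : wv m (m0 + 1) ∈ V' := by
    obtain ⟨hdiv, hmod⟩ := divmod_eq (p : ℤ) 0 (m0 + 1) (m0 + 1) hpz (by omega) (by omega)
      (by ring)
    exact hmem (m0 + 1) (by omega) (by omega) (by omega) (by omega) (by omega)
  refine ⟨?_, ?_, ?_⟩
  · -- nonzero
    intro hbot
    rw [hbot] at hgen
    exact wv_ne m (m0 + 1) (by omega) (by omega) (Submodule.mem_bot ℂ |>.mp hgen)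
  · -- proper
    intro htop
    have hsub : V' ≤ LinearMap.ker (LinearMap.proj (0 : Fin (m + 1))) := by
      rw [Submodule.span_le]
      rintro x ⟨r, h1, h2, h3, h4, h5, rfl⟩
      rw [emod_eq, emod_eq, hm0def] at h3
      have hrpos : 0 < r := by
        rcases h1.lt_or_eq with h | h
        · exact h
        · exfalso; rw [← h, Int.zero_emod] at h3; omega
      simp only [SetLike.mem_coe, LinearMap.mem_ker, LinearMap.proj_apply]
      rw [wv, dif_pos ⟨h1, h2⟩]
      apply Pi.single_eq_of_ne
      apply Fin.ne_of_val_ne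
      simp only [Fin.val_zero]
      omega
    have hin : wv m 0 ∈ LinearMap.ker (LinearMap.proj (0 : Fin (m + 1))) :=
      hsub (htop ▸ Submodule.mem_top)
    simp only [LinearMap.mem_ker, LinearMap.proj_apply] at hin
    rw [wv, dif_pos ⟨le_refl 0, by exact_mod_cast Nat.zero_le m⟩] at hin
    have h0 : (⟨(0 : ℤ).toNat, by omega⟩ : Fin (m + 1)) = 0 := by
      apply Fin.ext; simp
    rw [h0, Pi.single_eq_same] at hin
    exact one_ne_zero hin
  · -- invariance
    have key : ∀ (T : (Fin (m + 1) → ℂ) →ₗ[ℂ] (Fin (m + 1) → ℂ)),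
        (∀ x ∈ {x | ∃ r : ℤ, 0 ≤ r ∧ r ≤ m ∧
          ((m : ℤ)).emod p < r.emod p ∧ r.emod p < p ∧
          r.ediv p < ((m : ℤ)).ediv p ∧ x = wv m r}, T x ∈ V') →
        ∀ x ∈ V', T x ∈ V' := by
      intro T hT x hx
      have hle : V' ≤ V'.comap T := by
        rw [Submodule.span_le]
        intro y hy
        exact hT y hy
      exact hle hx
    intro x hx
    have hgen5 : ∀ y ∈ {x | ∃ r : ℤ, 0 ≤ r ∧ r ≤ m ∧
          ((m : ℤ)).emod p < r.emod p ∧ r.emod p < p ∧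
          r.ediv p < ((m : ℤ)).ediv p ∧ x = wv m r},
        K y ∈ V' ∧ e y ∈ V' ∧ f y ∈ V' ∧ E y ∈ V' ∧ F y ∈ V' := by
      rintro y ⟨r, h1, h2, h3, h4, h5, rfl⟩
      rw [emod_eq, emod_eq, hm0def] at h3
      rw [emod_eq] at h4
      rw [ediv_eq, ediv_eq, hm1def] at h5
      obtain ⟨r1, r0, hr1def, hr0def, hrdec, hr0n⟩ :
          ∃ r1 r0 : ℤ, r / p = r1 ∧ r % p = r0 ∧ r = r0 + p * r1 ∧ 0 ≤ r0 :=
        ⟨_, _, rfl, rfl, (Int.emod_add_mul_ediv r p).symm, Int.emod_nonneg _ (by omega)⟩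
      rw [hr0def] at h3 h4
      rw [hr1def] at h5
      have hr1n : 0 ≤ r1 := by rw [← hr1def]; exact Int.ediv_nonneg h1 (by omega)
      have hpr1 : 0 ≤ (p : ℤ) * r1 := mul_nonneg (by omega) hr1n
      have hpm1 : (p : ℤ) * 1 ≤ p * m1 := mul_le_mul_of_nonneg_left hm1ge (by omega)
      have hpm1' : (p : ℤ) * 1 = p := by ring
      have hprm : (p : ℤ) * r1 ≤ p * (m1 - 1) := mul_le_mul_of_nonneg_left (by omega) (by omega)
      have hprm' : (p : ℤ) * (m1 - 1) = p * m1 - p := by ring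
      have hmemwv : wv m r ∈ V' := by
        apply hmem r h1 h2
        · rw [hr0def]; exact h3
        · rw [hr0def]; exact h4
        · rw [hr1def]; exact h5
      refine ⟨?_, ?_, ?_, ?_, ?_⟩
      · rw [hK r h1 h2]; exact Submodule.smul_mem _ _ hmemwv
      · -- e
        rw [he r h1 h2]
        by_cases hc : r0 = m0 + 1
        · have hq : qintC ε ((m : ℤ) - r + 1) = 0 := by
            apply qint_zero_s9 p ε hε
            exact ⟨m1 - r1, by rw [hmdec, hrdec, hc]; ring⟩
          rw [hq, zero_smul]; exact Submodule.zero_mem _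
        · apply Submodule.smul_mem
          obtain ⟨hdiv, hmod⟩ := divmod_eq (p : ℤ) r1 (r0 - 1) (r - 1) hpz (by omega)
            (by omega) (by omega)
          refine hmem (r - 1) ?g1 ?g2 ?g3 ?g4 ?g5
          case g1 => omega
          case g2 => omega
          case g3 => omega
          case g4 => omega
          case g5 => omega
      · -- f
        rw [hf r h1 h2]
        by_cases hc : r0 = (p : ℤ) - 1
        · have hq : qintC ε (r + 1) = 0 := by
            apply qint_zero_s9 p ε hε
            exact ⟨r1 + 1, by rw [hrdec, hc]; ring⟩
          rw [hq, zero_smul]; exact Submodule.zero_mem _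
        · apply Submodule.smul_mem
          obtain ⟨hdiv, hmod⟩ := divmod_eq (p : ℤ) r1 (r0 + 1) (r + 1) hpz (by omega)
            (by omega) (by omega)
          have hb : (p : ℤ) * r1 ≤ p * (m1 - 1) :=
            mul_le_mul_of_nonneg_left (by omega) (by omega)
          have hb2 : (p : ℤ) * (m1 - 1) = p * m1 - p := by ring
          exact hmem (r + 1) (by omega) (by omega) (by omega) (by omega) (by omega)
      · -- E
        rw [hE r h1 h2]
        by_cases hc : r1 = 0
        · have h0 : r = r0 := by rw [hrdec, hc]; ring
          rw [wv_out m (r - p) (Or.inl (by omega)), smul_zero]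
          exact Submodule.zero_mem _
        · apply Submodule.smul_mem
          obtain ⟨hdiv, hmod⟩ := divmod_eq (p : ℤ) (r1 - 1) r0 (r - p) hpz (by omega)
            (by omega) (by rw [hrdec]; ring)
          have hb : (p : ℤ) * 1 ≤ p * r1 := mul_le_mul_of_nonneg_left (by omega) (by omega)
          have hb2 : (p : ℤ) * 1 = p := by ring
          exact hmem (r - p) (by omega) (by omega) (by omega) (by omega) (by omega)
      · -- F
        rw [hF r h1 h2]
        by_cases hc : r1 + 1 = m1
        · have hgt : (m : ℤ) < r + p := by
            have hb : (p : ℤ) * (r1 + 1) = p * r1 + p := by ring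
            rw [hmdec, hrdec, ← hc]; omega
          rw [wv_out m (r + p) (Or.inr hgt), smul_zero]
          exact Submodule.zero_mem _
        · apply Submodule.smul_mem
          obtain ⟨hdiv, hmod⟩ := divmod_eq (p : ℤ) (r1 + 1) r0 (r + p) hpz (by omega)
            (by omega) (by rw [hrdec]; ring)
          have hb : (p : ℤ) * (r1 + 1) ≤ p * (m1 - 1) :=
            mul_le_mul_of_nonneg_left (by omega) (by omega)
          have hb2 : (p : ℤ) * (m1 - 1) = p * m1 - p := by ring
          have hb3 : (p : ℤ) * (r1 + 1) = p * r1 + p := by ring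
          exact hmem (r + p) (by omega) (by omega) (by omega) (by omega) (by omega)
    exact ⟨key K (fun y hy => (hgen5 y hy).1) x hx,
           key e (fun y hy => (hgen5 y hy).2.1) x hx,
           key f (fun y hy => (hgen5 y hy).2.2.1) x hx,
           key E (fun y hy => (hgen5 y hy).2.2.2.1) x hx,
           key F (fun y hy => (hgen5 y hy).2.2.2.2) x hx⟩
end
end

section
/- Let ε be a primitive p-th root of unity (p odd > 1) and s a positive integer with s₀ ≠ 0 (where s = s₀ + p s₁, 0 ≤ s₀ < p). Let V^s be the complex vector space with basis {v_m : m ∈ Z≥0} and operators given by e^(r) v_m = [m+s choose m+s−r]_ε v_{m−r} and f^(r) v_m = (−1)^r [r+m choose r]_ε v_{m+r} for r = 1 and r = p (so e = e^(1), f = f^(1)), where v with negative index is zero. Then the subspace V' = span_C{v_m : p > m₀ ≥ p − s₀} (m = m₀ + p m₁, 0 ≤ m₀ < p) is invariant under e, f, e^(p), f^(p). -/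
noncomputable section

lemma qint_eq_zero {p : ℕ} (hp : p ≠ 0) {ε : ℂ} (hε : IsPrimitiveRoot ε p)
    {n : ℤ} (h : (p : ℤ) ∣ n) : qintC ε n = 0 := by
  have hne : ε ≠ 0 := hε.ne_zero hp
  have key : ∀ k : ℤ, (p : ℤ) ∣ k → ε ^ k = 1 := by
    rintro _ ⟨k, rfl⟩
    rw [zpow_mul]
    norm_num [hε.pow_eq_one]
  unfold qintC
  rw [key n h, key (-n) (dvd_neg.mpr h)]
  simp

/-- The free `ℂ`-module on basis `{v_m : m ∈ ℕ}`. -/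
abbrev V14 : Type := ℕ →₀ ℂ

/-- The basis vector `v_m`. -/
def vb (m : ℕ) : V14 := Finsupp.single m 1

/-- Basis vector with integer index, zero for negative indices. -/
def vbI (i : ℤ) : V14 := if 0 ≤ i then vb i.toNat else 0

/-- Let `ε` be a primitive `p`-th root of unity (`p` odd `> 1`) and `s > 0`
with `s₀ = s % p ≠ 0`.  On `V^s` with basis `{v_m}` and actions
`e v_m = [m+s]_ε v_{m-1}`, `f v_m = -[m+1]_ε v_{m+1}`,
`e^(p) v_m = ((m+s)₁) v_{m-p}`, `f^(p) v_m = (-1)^p (m₁+1) v_{m+p}`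
(these are the values `[m+s choose m+s-p]_ε` and `(-1)^p [p+m choose p]_ε`),
the subspace `V' = span{v_m : p > m₀ ≥ p - s₀}` is invariant under
`e`, `f`, `e^(p)`, `f^(p)`. -/
theorem Vs_invariant_subspace (p : ℕ) (hodd : Odd p) (hp : 1 < p)
    (ε : ℂ) (hε : IsPrimitiveRoot ε p) (s : ℕ) (hs : 0 < s) (hs0 : s % p ≠ 0)
    (e f E F : V14 →ₗ[ℂ] V14)
    (he : ∀ m : ℕ, e (vb m) = qintC ε ((m : ℤ) + s) • vbI ((m : ℤ) - 1))
    (hf : ∀ m : ℕ, f (vb m) = -(qintC ε ((m : ℤ) + 1)) • vb (m + 1))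
    (hE : ∀ m : ℕ,
      E (vb m) = ((((m : ℤ) + s).ediv p : ℤ) : ℂ) • vbI ((m : ℤ) - p))
    (hF : ∀ m : ℕ,
      F (vb m) = ((-1) ^ p * (((m : ℤ).ediv p + 1 : ℤ) : ℂ)) • vb (m + p)) :
    let V' : Submodule ℂ V14 :=
      Submodule.span ℂ {x | ∃ m : ℕ, p - s % p ≤ m % p ∧ m % p < p ∧ x = vb m}
    ∀ x ∈ V', e x ∈ V' ∧ f x ∈ V' ∧ E x ∈ V' ∧ F x ∈ V' := by
  intro V' x hx
  have hp0 : p ≠ 0 := by omega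
  have hmem : ∀ m : ℕ, p - s % p ≤ m % p → vb m ∈ V' :=
    fun m h1 => Submodule.subset_span ⟨m, h1, Nat.mod_lt _ (by omega), rfl⟩
  have key : ∀ m : ℕ, p - s % p ≤ m % p →
      e (vb m) ∈ V' ∧ f (vb m) ∈ V' ∧ E (vb m) ∈ V' ∧ F (vb m) ∈ V' := by
    intro m h1
    have hsp : s % p < p := Nat.mod_lt _ (by omega)
    have hmp : m % p < p := Nat.mod_lt _ (by omega)
    have hm1 : 1 ≤ m := by
      rcases Nat.eq_zero_or_pos m with h | h
      · exfalso; rw [h] at h1; simp at h1; omega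
      · exact h
    refine ⟨?_, ?_, ?_, ?_⟩
    · -- e
      rw [he m]
      rcases Nat.lt_or_ge (p - s % p) (m % p) with hlt | hge
      · -- coefficient possibly nonzero, index stays in range
        have hmod : m % p ≠ 0 := by omega
        have hm1' : (m - 1) % p = m % p - 1 := by
          conv_lhs => rw [show m - 1 = p * (m / p) + (m % p - 1) by
            have := Nat.div_add_mod m p; omega]
          rw [Nat.mul_add_mod, Nat.mod_eq_of_lt (by omega)]
        have hvb : vbI ((m : ℤ) - 1) = vb (m - 1) := by
          unfold vbI
          rw [if_pos (by omega)]
          congr 1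
          omega
        rw [hvb]
        exact V'.smul_mem _ (hmem _ (by omega))
      · -- boundary: m % p = p - s % p, coefficient vanishes
        have heq : m % p = p - s % p := le_antisymm hge h1
        have hdvd : (p : ℤ) ∣ ((m : ℤ) + s) := by
          have : (m + s) % p = 0 := by
            rw [Nat.add_mod, heq]
            have : p - s % p + s % p = p := by omega
            rw [this, Nat.mod_self]
          have hd : p ∣ m + s := Nat.dvd_of_mod_eq_zero this
          exact_mod_cast Int.natCast_dvd_natCast.mpr hd
        rw [qint_eq_zero hp0 hε hdvd]
        simp only [zero_smul, smul_zero]; exact V'.zero_mem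
    · -- f
      rw [hf m]
      rcases Nat.lt_or_ge (m % p) (p - 1) with hlt | hge
      · have hm1' : (m + 1) % p = m % p + 1 := by
          conv_lhs => rw [show m + 1 = p * (m / p) + (m % p + 1) by
            have := Nat.div_add_mod m p; omega]
          rw [Nat.mul_add_mod, Nat.mod_eq_of_lt (by omega)]
        exact V'.smul_mem _ (hmem _ (by omega))
      · have heq : m % p = p - 1 := by omega
        have hdvd : (p : ℤ) ∣ ((m : ℤ) + 1) := by
          have : (m + 1) % p = 0 := by
            conv_lhs => rw [show m + 1 = p * (m / p) + p by
              have := Nat.div_add_mod m p; omega]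
            rw [Nat.mul_add_mod, Nat.mod_self]
          have hd : p ∣ m + 1 := Nat.dvd_of_mod_eq_zero this
          exact_mod_cast Int.natCast_dvd_natCast.mpr hd
        rw [qint_eq_zero hp0 hε hdvd]
        simp only [neg_zero, zero_smul]; exact V'.zero_mem
    · -- E
      rw [hE m]
      rcases Nat.lt_or_ge m p with hlt | hge
      · have : vbI ((m : ℤ) - p) = 0 := by
          unfold vbI; rw [if_neg (by omega)]
        rw [this]
        simp only [zero_smul, smul_zero]; exact V'.zero_mem
      · have hvb : vbI ((m : ℤ) - p) = vb (m - p) := by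
          unfold vbI
          rw [if_pos (by omega)]
          congr 1
          omega
        have hmod : (m - p) % p = m % p := by
          conv_rhs => rw [show m = (m - p) + p by omega]
          rw [Nat.add_mod_right]
        rw [hvb]
        exact V'.smul_mem _ (hmem _ (by omega))
    · -- F
      rw [hF m]
      have hmod : (m + p) % p = m % p := Nat.add_mod_right m p
      exact V'.smul_mem _ (hmem _ (by omega))
  refine Submodule.span_induction ?_ ?_ ?_ ?_ hx
  · rintro x ⟨m, h1, h2, rfl⟩
    exact key m h1
  · simp only [map_zero]
    exact ⟨V'.zero_mem, V'.zero_mem, V'.zero_mem, V'.zero_mem⟩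
  · rintro x y _ _ ⟨he1, hf1, hE1, hF1⟩ ⟨he2, hf2, hE2, hF2⟩
    simp only [map_add]
    exact ⟨V'.add_mem he1 he2, V'.add_mem hf1 hf2, V'.add_mem hE1 hE2,
      V'.add_mem hF1 hF2⟩
  · rintro a x _ ⟨he1, hf1, hE1, hF1⟩
    simp only [map_smul]
    exact ⟨V'.smul_mem a he1, V'.smul_mem a hf1, V'.smul_mem a hE1,
      V'.smul_mem a hF1⟩
end
end
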